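/- The Normal Discrepancy score is non-negative: for window size w, if Σ_L and Σ_R are the sample covariance matrices of the left and right windows of equal length w, and Σ is the sample covariance matrix of their concatenation (the centered window of length 2w), then w · ln( det Σ / √(det Σ_L · det Σ_R) ) ≥ 0, provided all three determinants are positive. -/

import Mathlib

open Finset Matrix

/-- Sample covariance matrix of the data points `y 0, …, y (m-1) ∈ ℝ^d`. -/
noncomputable def sampleCov {d m : ℕ} (y : Fin m → Fin d → ℝ) : Matrix (Fin d) (Fin d) ℝ :=
  Matrix.of fun a b =>
    (∑ j, (y j a - (∑ i, y i a) / m) * (y j b - (∑ i, y i b) / m)) / m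

lemma det_decomp {n : Type*} [Fintype n] [DecidableEq n] {A B : Matrix n n ℝ}
    (hA : A.PosDef) (hB : B.PosSemidef) :
    ∃ μ : n → ℝ, (∀ i, 0 ≤ μ i) ∧ B.det = A.det * ∏ i, μ i ∧
      (A + B).det = A.det * ∏ i, (1 + μ i) := by
  classical
  open scoped MatrixOrder in set S := CFC.sqrt A with hSdef
  have hS : S.PosSemidef := open scoped MatrixOrder in (CFC.sqrt_nonneg A).posSemidef
  have hSS : S * S = A := open scoped MatrixOrder in
    CFC.sqrt_mul_sqrt_self A (Matrix.PosSemidef.nonneg hA.posSemidef)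
  have hdetS : S.det * S.det = A.det := by rw [← Matrix.det_mul, hSS]
  have hdS : S.det ≠ 0 := by
    intro h
    rw [h, mul_zero] at hdetS
    exact hA.det_pos.ne' hdetS.symm
  have hunit : IsUnit S.det := isUnit_iff_ne_zero.mpr hdS
  have hSinv : S * S⁻¹ = 1 := Matrix.mul_nonsing_inv _ hunit
  have hinvS : S⁻¹ * S = 1 := Matrix.nonsing_inv_mul _ hunit
  set C := S⁻¹ * B * S⁻¹ with hCdef
  have hinvH : (S⁻¹)ᴴ = S⁻¹ := hS.isHermitian.inv
  have hC : C.PosSemidef := by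
    have := hB.mul_mul_conjTranspose_same S⁻¹
    rwa [hinvH] at this
  have hBC : B = S * C * S := by
    rw [hCdef]
    have : S * (S⁻¹ * B * S⁻¹) * S = (S * S⁻¹) * B * (S⁻¹ * S) := by noncomm_ring
    rw [this, hSinv, hinvS, one_mul, mul_one]
  refine ⟨hC.1.eigenvalues, hC.eigenvalues_nonneg, ?_, ?_⟩
  · rw [hBC, Matrix.det_mul, Matrix.det_mul, mul_comm, ← mul_assoc, hdetS,
      hC.1.det_eq_prod_eigenvalues]
    norm_num
  · have hAB : A + B = S * (1 + C) * S := by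
      rw [hBC, mul_add, add_mul, mul_one, hSS]
    have hU := (Matrix.mem_unitaryGroup_iff).mp (hC.1.eigenvectorUnitary).2
    have h1C : 1 + C = (hC.1.eigenvectorUnitary : Matrix n n ℝ) *
        Matrix.diagonal (fun i => 1 + hC.1.eigenvalues i) *
        (star (hC.1.eigenvectorUnitary : Matrix n n ℝ)) := by
      conv_lhs => rw [hC.1.spectral_theorem, ← hU]
      have : Matrix.diagonal (fun i => 1 + hC.1.eigenvalues i) =
          1 + Matrix.diagonal (RCLike.ofReal ∘ hC.1.eigenvalues) := by
        rw [← Matrix.diagonal_one, Matrix.diagonal_add]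
        rfl
      rw [this, mul_add, add_mul, mul_one, Unitary.conjStarAlgAut_apply]
    have hU' := (Matrix.mem_unitaryGroup_iff').mp (hC.1.eigenvectorUnitary).2
    have hdet1C : (1 + C).det = ∏ i, (1 + hC.1.eigenvalues i) := by
      rw [h1C, Matrix.det_mul, Matrix.det_mul, mul_comm, ← mul_assoc, ← Matrix.det_mul, hU',
        Matrix.det_one, one_mul, Matrix.det_diagonal]
    rw [hAB, Matrix.det_mul, Matrix.det_mul, mul_comm, ← mul_assoc, hdetS, hdet1C]

lemma prod_sqrt {n : Type*} [Fintype n] (f : n → ℝ) (hf : ∀ i, 0 ≤ f i) :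
    ∏ i, Real.sqrt (f i) = Real.sqrt (∏ i, f i) := by
  classical
  induction (Finset.univ : Finset n) using Finset.cons_induction with
  | empty => simp
  | cons a s ha ih =>
      rw [Finset.prod_cons, Finset.prod_cons, ih, ← Real.sqrt_mul (hf a)]

lemma posDef_of_posSemidef_det_pos {n : Type*} [Fintype n] [DecidableEq n]
    {A : Matrix n n ℝ} (hA : A.PosSemidef) (hd : 0 < A.det) : A.PosDef := by
  refine .of_dotProduct_mulVec_pos hA.1 fun x hx => ?_
  rcases lt_or_eq_of_le (hA.dotProduct_mulVec_nonneg x) with h | h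
  · exact h
  · exfalso
    have h0 : A *ᵥ x = 0 := (hA.dotProduct_mulVec_zero_iff x).mp h.symm
    have hinj : Function.Injective (A.mulVec) :=
      (Matrix.mulVec_injective_iff_isUnit).mpr ((Matrix.isUnit_iff_isUnit_det A).mpr
        (isUnit_iff_ne_zero.mpr hd.ne'))
    exact hx (hinj (by simp [h0]))

lemma det_le_det_add {n : Type*} [Fintype n] [DecidableEq n] {A B : Matrix n n ℝ}
    (hA : A.PosDef) (hB : B.PosSemidef) : A.det ≤ (A + B).det := by
  obtain ⟨μ, hμ, _, hAB⟩ := det_decomp hA hB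
  rw [hAB]
  nth_rewrite 1 [← mul_one A.det]
  refine mul_le_mul_of_nonneg_left ?_ hA.det_pos.le
  calc (1:ℝ) = ∏ _i : n, (1:ℝ) := by simp
    _ ≤ ∏ i, (1 + μ i) := Finset.prod_le_prod (by simp) (fun i _ => by linarith [hμ i])

lemma sqrt_le_det_half {n : Type*} [Fintype n] [DecidableEq n] {A B : Matrix n n ℝ}
    (hA : A.PosDef) (hB : B.PosSemidef) :
    Real.sqrt (A.det * B.det) ≤ ((2:ℝ)⁻¹ • (A + B)).det := by
  obtain ⟨μ, hμ, hBdet, hAB⟩ := det_decomp hA hB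
  rw [Matrix.det_smul, hAB]
  have h1 : ((2:ℝ)⁻¹) ^ Fintype.card n * (A.det * ∏ i, (1 + μ i)) =
      A.det * ∏ i, ((1 + μ i) / 2) := by
    rw [Finset.prod_div_distrib]
    simp [Finset.prod_const, div_eq_mul_inv]
    ring
  rw [h1]
  have h2 : Real.sqrt (A.det * B.det) = A.det * ∏ i, Real.sqrt (μ i) := by
    rw [hBdet, ← mul_assoc, Real.sqrt_mul (mul_self_nonneg A.det),
      Real.sqrt_mul_self hA.det_pos.le, prod_sqrt _ hμ]
  rw [h2]
  refine mul_le_mul_of_nonneg_left ?_ hA.det_pos.le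
  refine Finset.prod_le_prod (fun i _ => Real.sqrt_nonneg _) (fun i _ => ?_)
  nlinarith [sq_nonneg (Real.sqrt (μ i) - 1), Real.sq_sqrt (hμ i)]

lemma sampleCov_posSemidef {d m : ℕ} (y : Fin m → Fin d → ℝ) :
    (sampleCov y).PosSemidef := by
  have h : sampleCov y =
      (Matrix.of fun (j : Fin m) (a : Fin d) =>
        (y j a - (∑ i, y i a) / m) / Real.sqrt m)ᴴ *
      (Matrix.of fun (j : Fin m) (a : Fin d) =>
        (y j a - (∑ i, y i a) / m) / Real.sqrt m) := by
    ext a b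
    simp only [sampleCov, Matrix.of_apply, Matrix.mul_apply, Matrix.conjTranspose_apply,
      star_trivial, Finset.sum_div]
    refine Finset.sum_congr rfl fun j _ => ?_
    rw [div_mul_div_comm, Real.mul_self_sqrt (Nat.cast_nonneg m)]
  rw [h]
  exact Matrix.posSemidef_conjTranspose_mul_self _

lemma outer_posSemidef {d : ℕ} (v : Fin d → ℝ) :
    (Matrix.of fun a b => v a * v b / 4).PosSemidef := by
  have h : (Matrix.of fun a b => v a * v b / 4) =
      (Matrix.of fun (_ : Fin 1) (a : Fin d) => v a / 2)ᴴ *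
      (Matrix.of fun (_ : Fin 1) (a : Fin d) => v a / 2) := by
    ext a b
    simp only [Matrix.of_apply, Matrix.mul_apply, Matrix.conjTranspose_apply, star_trivial,
      Finset.sum_const, Finset.card_univ, Fintype.card_fin, one_smul]
    rw [div_mul_div_comm]
    norm_num
  rw [h]
  exact Matrix.posSemidef_conjTranspose_mul_self _

lemma posDef_smul {n : Type*} [Fintype n] {A : Matrix n n ℝ} {c : ℝ} (hc : 0 < c)
    (hA : A.PosDef) : (c • A).PosDef := by
  refine .of_dotProduct_mulVec_pos ?_ fun x hx => ?_
  · unfold Matrix.IsHermitian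
    rw [Matrix.conjTranspose_smul, hA.1.eq]
    simp
  · rw [Matrix.smul_mulVec, dotProduct_smul, smul_eq_mul]
    exact mul_pos hc (hA.dotProduct_mulVec_pos hx)

lemma sum_split {w : ℕ} (f : Fin (2 * w) → ℝ) :
    ∑ i, f i = (∑ j : Fin w, f ⟨j.val, (by have := j.isLt; omega : j.val + 0 < 2 * w)⟩) +
      ∑ j : Fin w, f ⟨w + j.val, (by have := j.isLt; omega : w + j.val + 0 < 2 * w)⟩ := by
  have h1 : ∑ i, f i = ∑ i : Fin (w + w), f (Fin.cast (two_mul w).symm i) :=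
    (Fintype.sum_equiv (finCongr (two_mul w).symm) _ _ (fun i => rfl)).symm
  rw [h1, Fin.sum_univ_add]
  congr 1

lemma sampleCov_apply {d m : ℕ} (hm : m ≠ 0) (y : Fin m → Fin d → ℝ) (a b : Fin d) :
    sampleCov y a b =
      ((∑ j, y j a * y j b) - (∑ j, y j a) * (∑ j, y j b) / m) / m := by
  have hm' : (m : ℝ) ≠ 0 := Nat.cast_ne_zero.mpr hm
  simp only [sampleCov, Matrix.of_apply]
  congr 1
  have key : ∀ j : Fin m, (y j a - (∑ i, y i a) / m) * (y j b - (∑ i, y i b) / m)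
      = (y j a * y j b - y j a * ((∑ i, y i b) / m) - ((∑ i, y i a) / m) * y j b)
        + ((∑ i, y i a) / m) * ((∑ i, y i b) / m) := fun j => by ring
  rw [Finset.sum_congr rfl fun j _ => key j, Finset.sum_add_distrib, Finset.sum_sub_distrib,
    Finset.sum_sub_distrib, ← Finset.sum_mul, ← Finset.mul_sum, Finset.sum_const,
    Finset.card_univ, Fintype.card_fin, nsmul_eq_mul]
  field_simp
  ring

lemma sampleCov_decomp {d w : ℕ} (hw : 0 < w) (x : Fin (2 * w) → Fin d → ℝ) :
    sampleCov x = (2:ℝ)⁻¹ • (sampleCov (fun j : Fin w => x ⟨j.val, (by have := j.isLt; omega : j.val + 0 < 2 * w)⟩) +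
        sampleCov (fun j : Fin w => x ⟨w + j.val, (by have := j.isLt; omega : w + j.val + 0 < 2 * w)⟩)) +
      Matrix.of (fun a b =>
        ((∑ j : Fin w, x ⟨j.val, (by have := j.isLt; omega : j.val + 0 < 2 * w)⟩ a) / w -
          (∑ j : Fin w, x ⟨w + j.val, (by have := j.isLt; omega : w + j.val + 0 < 2 * w)⟩ a) / w) *
        ((∑ j : Fin w, x ⟨j.val, (by have := j.isLt; omega : j.val + 0 < 2 * w)⟩ b) / w -
          (∑ j : Fin w, x ⟨w + j.val, (by have := j.isLt; omega : w + j.val + 0 < 2 * w)⟩ b) / w) / 4) := by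
  have hw' : (w : ℝ) ≠ 0 := Nat.cast_ne_zero.mpr hw.ne'
  ext a b
  simp only [Matrix.add_apply, Matrix.smul_apply, Matrix.of_apply, smul_eq_mul]
  rw [sampleCov_apply (by omega) x, sampleCov_apply hw.ne', sampleCov_apply hw.ne',
    sum_split (fun j => x j a * x j b), sum_split (fun j => x j a), sum_split (fun j => x j b)]
  push_cast
  field_simp
  ring

/-- the Normal Discrepancy score is non-negative, provided the
three covariance determinants are positive. -/
theorem normal_discrepancy_nonneg {d w : ℕ} (hw : 0 < w) (x : Fin (2 * w) → Fin d → ℝ)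
    (hL : 0 < (sampleCov (fun j : Fin w => x ⟨j.val, by have := j.isLt; omega⟩)).det)
    (hR : 0 < (sampleCov (fun j : Fin w => x ⟨w + j.val, by have := j.isLt; omega⟩)).det)
    (hS : 0 < (sampleCov x).det) :
    0 ≤ (w : ℝ) * Real.log ((sampleCov x).det /
        Real.sqrt ((sampleCov (fun j : Fin w => x ⟨j.val, by have := j.isLt; omega⟩)).det *
          (sampleCov (fun j : Fin w => x ⟨w + j.val, by have := j.isLt; omega⟩)).det)) := by
  set SL := sampleCov (fun j : Fin w => x ⟨j.val, by have := j.isLt; omega⟩) with hSL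
  set SR := sampleCov (fun j : Fin w => x ⟨w + j.val, by have := j.isLt; omega⟩) with hSR
  have hLpd : SL.PosDef := posDef_of_posSemidef_det_pos (sampleCov_posSemidef _) hL
  have hRpd : SR.PosDef := posDef_of_posSemidef_det_pos (sampleCov_posSemidef _) hR
  have havg : ((2:ℝ)⁻¹ • (SL + SR)).PosDef :=
    posDef_smul (by norm_num) (hLpd.add_posSemidef hRpd.posSemidef)
  have hdecomp := sampleCov_decomp hw x
  have hstep1 : ((2:ℝ)⁻¹ • (SL + SR)).det ≤ (sampleCov x).det := by
    rw [hdecomp]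
    exact det_le_det_add havg (outer_posSemidef _)
  have hstep2 : Real.sqrt (SL.det * SR.det) ≤ ((2:ℝ)⁻¹ • (SL + SR)).det :=
    sqrt_le_det_half hLpd hRpd.posSemidef
  have hsqrtpos : 0 < Real.sqrt (SL.det * SR.det) :=
    Real.sqrt_pos.mpr (mul_pos hL hR)
  refine mul_nonneg (Nat.cast_nonneg w) (Real.log_nonneg ?_)
  rw [le_div_iff₀ hsqrtpos, one_mul]
  exact hstep2.trans hstep1
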